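/- Let C be an X-neighbour transitive code in H(m,q) with minimum distance δ ≥ 3, and let 𝒥 be an X-invariant partition of the coordinate set {1,…,m}. Then for each J ∈ 𝒥, the projected code π_J(C) is χ(X_J)-neighbour transitive, where X_J is the setwise stabiliser of J in X and χ(x) denotes the induced automorphism of H(J,q). -/

import Mathlib

/-- Distance from a vertex to a code. -/
noncomputable def distToCode {ι Q : Type*} [Fintype ι] [DecidableEq Q]
    (ν : ι → Q) (C : Set (ι → Q)) : ℕ :=
  sInf {d | ∃ β ∈ C, d = hammingDist ν β}

/-- The automorphism of `H(m,q)` determined by `h ∈ Sym(Q)^m`, `σ ∈ Sym(Fin m)`. -/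
def hammAut {m : ℕ} {Q : Type*} (h : Fin m → Equiv.Perm Q) (σ : Equiv.Perm (Fin m)) :
    Equiv.Perm (Fin m → Q) :=
  (Equiv.piCongrRight h).trans (Equiv.arrowCongr σ (Equiv.refl Q))

/-- `C` is `X`-neighbour transitive: `X` consists of Hamming graph automorphisms,
stabilises `C` setwise, and acts transitively on `C` and on the neighbour set `C₁`. -/
def NbrTrans {m : ℕ} {Q : Type*} [DecidableEq Q]
    (X : Subgroup (Equiv.Perm (Fin m → Q))) (C : Set (Fin m → Q)) : Prop :=
  (∀ x ∈ X, ∃ h σ, x = hammAut h σ) ∧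
  (∀ x ∈ X, (⇑x) '' C = C) ∧
  (∀ α ∈ C, ∀ β ∈ C, ∃ x ∈ X, x α = β) ∧
  (∀ ν₁ ν₂ : Fin m → Q, distToCode ν₁ C = 1 → distToCode ν₂ C = 1 →
    ∃ x ∈ X, x ν₁ = ν₂)

/-- Projection of a vertex of `H(m,q)` onto the coordinates in `J`. -/
def proj {m : ℕ} {Q : Type*} (J : Finset (Fin m)) (α : Fin m → Q) : J → Q :=
  fun j => α j

/-!
A vertex at distance one from a code of minimum distance at least three has a unique nearest
codeword, and in coordinates it is `Function.update α j a` for that codeword `α`. An element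
`x = (h, σ)` of `X` mapping one such neighbour `update α j₁ a` to another `update β j₂ b` is an
isometry, so it must map `α` to `β` and `j₁` to `j₂`. If `j₁, j₂ ∈ J`, then `J^σ` is a block of the
`X`-invariant partition meeting `J`, so `σ` stabilises `J` and `x` induces an automorphism of
`H(J,q)` doing the same on projections. Every neighbour of `π_J(C)` lifts to a neighbour of `C`
differing from a codeword in a coordinate of `J`, and two distinct projected codewords differ in
some coordinate of `J`, which gives both transitivity statements.
-/

open Function

section Hamming

variable {ι Q : Type*} [Fintype ι] [DecidableEq ι] [DecidableEq Q]

lemma hammingDist_update_self {f : ι → Q} {i : ι} {a : Q} (ha : a ≠ f i) :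
    hammingDist (update f i a) f = 1 := by
  rw [hammingDist, Finset.card_eq_one]
  refine ⟨i, Finset.ext fun k => ?_⟩
  by_cases hk : k = i
  · subst hk; simpa using ha
  · simp [hk]

lemma exists_eq_update_of_hammingDist_eq_one {ν f : ι → Q} (hν : hammingDist ν f = 1) :
    ∃ j, ν j ≠ f j ∧ ν = update f j (ν j) := by
  obtain ⟨j, hj⟩ := Finset.card_eq_one.mp hν
  have hdiff : ∀ k, ν k ≠ f k ↔ k = j := fun k => by
    simpa using Finset.ext_iff.mp hj k
  refine ⟨j, (hdiff j).mpr rfl, funext fun k => ?_⟩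
  by_cases hk : k = j
  · subst hk; simp
  · simpa [hk] using (hdiff k).not.mpr hk

end Hamming

section CodeDistance

variable {ι Q : Type*} [Fintype ι] [DecidableEq Q] {C : Set (ι → Q)}

lemma distToCode_eq_one {ν α : ι → Q} (hα : α ∈ C) (hνα : hammingDist ν α = 1) (hν : ν ∉ C) :
    distToCode ν C = 1 := by
  have hle : distToCode ν C ≤ 1 := Nat.sInf_le ⟨α, hα, hνα.symm⟩
  have hne : distToCode ν C ≠ 0 := by
    rw [distToCode, Ne, Nat.sInf_eq_zero]
    rintro (⟨β, hβ, hνβ⟩ | hempty)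
    · exact hν (hammingDist_eq_zero.mp hνβ.symm ▸ hβ)
    · exact Set.eq_empty_iff_forall_notMem.mp hempty 1 ⟨α, hα, hνα.symm⟩
  omega

lemma exists_hammingDist_eq_one_of_distToCode_eq_one {ν : ι → Q} (hν : distToCode ν C = 1) :
    ∃ α ∈ C, hammingDist ν α = 1 := by
  have hne : {d | ∃ β ∈ C, d = hammingDist ν β}.Nonempty :=
    Set.nonempty_iff_ne_empty.mpr fun h => by simp [distToCode, h] at hν
  obtain ⟨α, hα, hd⟩ := Nat.sInf_mem hne
  exact ⟨α, hα, hd.symm.trans hν⟩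

lemma eq_of_hammingDist_eq_one (hC : ∀ α ∈ C, ∀ β ∈ C, α ≠ β → 3 ≤ hammingDist α β)
    {ν α β : ι → Q} (hα : α ∈ C) (hβ : β ∈ C)
    (hνα : hammingDist ν α = 1) (hνβ : hammingDist ν β = 1) : α = β := by
  by_contra hαβ
  have := hammingDist_triangle_left α β ν
  have := hC α hα β hβ hαβ
  omega

lemma distToCode_update_eq_one [DecidableEq ι]
    (hC : ∀ α ∈ C, ∀ β ∈ C, α ≠ β → 3 ≤ hammingDist α β)
    {α : ι → Q} (hα : α ∈ C) {i : ι} {a : Q} (ha : a ≠ α i) :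
    distToCode (update α i a) C = 1 := by
  have hdist := hammingDist_update_self ha
  refine distToCode_eq_one hα hdist fun hmem => ?_
  have := hC _ hmem α hα fun h => by simp [h] at hdist
  omega

end CodeDistance

section HammingAut

variable {m : ℕ} {Q : Type*}

lemma hammAut_apply (h : Fin m → Equiv.Perm Q) (σ : Equiv.Perm (Fin m)) (f : Fin m → Q)
    (i : Fin m) : hammAut h σ f i = h (σ.symm i) (f (σ.symm i)) := rfl

lemma hammAut_one : hammAut (fun _ : Fin m => (1 : Equiv.Perm Q)) 1 = 1 := rfl

lemma hammAut_update (h : Fin m → Equiv.Perm Q) (σ : Equiv.Perm (Fin m)) (f : Fin m → Q)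
    (i : Fin m) (a : Q) :
    hammAut h σ (update f i a) = update (hammAut h σ f) (σ i) (h i a) := by
  funext k
  obtain ⟨k, rfl⟩ := σ.surjective k
  by_cases hk : k = i
  · subst hk; simp [hammAut_apply]
  · simp [hammAut_apply, hk]

end HammingAut

lemma proj_update {m : ℕ} {Q : Type*} {J : Finset (Fin m)} (α : Fin m → Q) (j : J) (a : Q) :
    proj J (update α j a) = update (proj J α) j a :=
  update_comp_eq_of_injective α Subtype.val_injective j a

section Induced

variable {m : ℕ} {Q : Type*} {X : Subgroup (Equiv.Perm (Fin m → Q))} {C : Set (Fin m → Q)}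
  {J : Finset (Fin m)}

variable (X J) in
/-- The group `χ(X_J)` of the paper, as a set of permutations of `H(J,q)`. -/
def inducedAutSet : Set (Equiv.Perm (J → Q)) :=
  {y | ∃ (h : Fin m → Equiv.Perm Q) (σ : Equiv.Perm (Fin m)),
    hammAut h σ ∈ X ∧ J.image σ = J ∧ ∀ α : Fin m → Q, y (proj J α) = proj J (hammAut h σ α)}

lemma one_mem_inducedAutSet : 1 ∈ inducedAutSet X J :=
  ⟨fun _ => 1, 1, hammAut_one (Q := Q) ▸ X.one_mem, by simp, fun _ => rfl⟩

lemma exists_mem_inducedAutSet {h : Fin m → Equiv.Perm Q} {σ : Equiv.Perm (Fin m)}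
    (hx : hammAut h σ ∈ X) (hσ : J.image σ = J) :
    ∃ y ∈ inducedAutSet X J, ∀ γ, y (proj J γ) = proj J (hammAut h σ γ) := by
  have hσJ : ∀ i, σ i ∈ J ↔ i ∈ J := fun i => by
    conv_lhs => rw [← hσ]
    exact σ.injective.mem_finset_image
  let y : Equiv.Perm (J → Q) :=
    (Equiv.piCongrRight fun j : J => h j).trans
      (Equiv.arrowCongr (σ.subtypePerm hσJ) (Equiv.refl Q))
  exact ⟨y, ⟨h, σ, hx, hσ, fun _ => rfl⟩, fun _ => rfl⟩

lemma image_proj_eq_of_mem_inducedAutSet (hXC : ∀ x ∈ X, ⇑x '' C = C) {y : Equiv.Perm (J → Q)}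
    (hy : y ∈ inducedAutSet X J) : ⇑y '' (proj J '' C) = proj J '' C := by
  obtain ⟨h, σ, hx, -, hyproj⟩ := hy
  rw [Set.image_image, funext hyproj, ← Set.image_image, hXC _ hx]

end Induced

section Transitivity

variable {m : ℕ} {Q : Type*} [DecidableEq Q] {X : Subgroup (Equiv.Perm (Fin m → Q))}
  {C : Set (Fin m → Q)} {𝒥 : Finset (Finset (Fin m))} {J : Finset (Fin m)}

lemma exists_inducedAut_map_update (hNT : NbrTrans X C)
    (hC : ∀ α ∈ C, ∀ β ∈ C, α ≠ β → 3 ≤ hammingDist α β)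
    (hpart : ∀ k : Fin m, ∃! J', J' ∈ 𝒥 ∧ k ∈ J')
    (hinv : ∀ (h : Fin m → Equiv.Perm Q) (σ : Equiv.Perm (Fin m)),
      hammAut h σ ∈ X → ∀ J' ∈ 𝒥, J'.image σ ∈ 𝒥)
    (hJ : J ∈ 𝒥) {α β : Fin m → Q} (hα : α ∈ C) (hβ : β ∈ C) {j₁ j₂ : Fin m}
    (hj₁ : j₁ ∈ J) (hj₂ : j₂ ∈ J) {a b : Q} (ha : a ≠ α j₁) (hb : b ≠ β j₂) :
    ∃ y ∈ inducedAutSet X J,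
      y (proj J (update α j₁ a)) = proj J (update β j₂ b) ∧ y (proj J α) = proj J β := by
  obtain ⟨hXaut, hXC, -, hXnbr⟩ := hNT
  obtain ⟨x, hx, hxν⟩ := hXnbr _ _ (distToCode_update_eq_one hC hα ha)
    (distToCode_update_eq_one hC hβ hb)
  obtain ⟨h, σ, rfl⟩ := hXaut x hx
  rw [hammAut_update] at hxν
  have hxα : hammAut h σ α = β := by
    have hxαC : hammAut h σ α ∈ C := hXC _ hx ▸ Set.mem_image_of_mem _ hα
    refine eq_of_hammingDist_eq_one hC hxαC hβ ?_ (hammingDist_update_self hb)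
    rw [← hxν]
    exact hammingDist_update_self (by simpa [hammAut_apply] using ha)
  have hσj : σ j₁ = j₂ := by
    by_contra hne
    have := congr_fun hxν j₂
    rw [hxα, update_of_ne (Ne.symm hne), update_self] at this
    exact hb this.symm
  have hσJ : J.image σ = J :=
    (hpart j₂).unique ⟨hinv h σ hx J hJ, Finset.mem_image.mpr ⟨j₁, hj₁, hσj⟩⟩ ⟨hJ, hj₂⟩
  obtain ⟨y, hy, hyproj⟩ := exists_mem_inducedAutSet hx hσJ
  exact ⟨y, hy, by rw [hyproj, hammAut_update, hxν], by rw [hyproj, hxα]⟩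

lemma exists_proj_update_eq_of_distToCode_eq_one {ν : J → Q}
    (hν : distToCode ν (proj J '' C) = 1) :
    ∃ α ∈ C, ∃ j : J, ∃ a, a ≠ α j ∧ proj J (update α j a) = ν := by
  obtain ⟨_, ⟨α, hα, rfl⟩, hνα⟩ := exists_hammingDist_eq_one_of_distToCode_eq_one hν
  obtain ⟨j, hj, hνj⟩ := exists_eq_update_of_hammingDist_eq_one hνα
  exact ⟨α, hα, j, ν j, hj, by rw [proj_update, ← hνj]⟩

lemma exists_inducedAut_proj_code (hNT : NbrTrans X C)
    (hC : ∀ α ∈ C, ∀ β ∈ C, α ≠ β → 3 ≤ hammingDist α β)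
    (hpart : ∀ k : Fin m, ∃! J', J' ∈ 𝒥 ∧ k ∈ J')
    (hinv : ∀ (h : Fin m → Equiv.Perm Q) (σ : Equiv.Perm (Fin m)),
      hammAut h σ ∈ X → ∀ J' ∈ 𝒥, J'.image σ ∈ 𝒥)
    (hJ : J ∈ 𝒥)
    {α β : Fin m → Q} (hα : α ∈ C) (hβ : β ∈ C) :
    ∃ y ∈ inducedAutSet X J, y (proj J α) = proj J β := by
  by_cases hαβ : proj J α = proj J β
  · exact ⟨1, one_mem_inducedAutSet, hαβ⟩
  obtain ⟨j, hj⟩ := Function.ne_iff.mp hαβ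
  -- neighbours of `α` and `β` in coordinate `j`, chosen with the value of the other codeword
  obtain ⟨y, hy, -, hyαβ⟩ := exists_inducedAut_map_update hNT hC hpart hinv hJ hα hβ j.2 j.2
    (a := β j) (b := α j) (Ne.symm hj) hj
  exact ⟨y, hy, hyαβ⟩

lemma exists_inducedAut_proj_neighbour (hNT : NbrTrans X C)
    (hC : ∀ α ∈ C, ∀ β ∈ C, α ≠ β → 3 ≤ hammingDist α β)
    (hpart : ∀ k : Fin m, ∃! J', J' ∈ 𝒥 ∧ k ∈ J')
    (hinv : ∀ (h : Fin m → Equiv.Perm Q) (σ : Equiv.Perm (Fin m)),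
      hammAut h σ ∈ X → ∀ J' ∈ 𝒥, J'.image σ ∈ 𝒥)
    (hJ : J ∈ 𝒥)
    {ν₁ ν₂ : J → Q} (hν₁ : distToCode ν₁ (proj J '' C) = 1)
    (hν₂ : distToCode ν₂ (proj J '' C) = 1) : ∃ y ∈ inducedAutSet X J, y ν₁ = ν₂ := by
  obtain ⟨α, hα, j₁, a, ha, rfl⟩ := exists_proj_update_eq_of_distToCode_eq_one hν₁
  obtain ⟨β, hβ, j₂, b, hb, rfl⟩ := exists_proj_update_eq_of_distToCode_eq_one hν₂
  obtain ⟨y, hy, hyν, -⟩ :=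
    exists_inducedAut_map_update hNT hC hpart hinv hJ hα hβ j₁.2 j₂.2 ha hb
  exact ⟨y, hy, hyν⟩

end Transitivity

/-- For an `X`-neighbour transitive code `C` with minimum distance `δ ≥ 3` and a block `J`
of an `X`-invariant partition of the coordinates, the projected code `π_J(C)` is
`χ(X_J)`-neighbour transitive, where `χ(x)` is the automorphism of `H(J,q)` induced by
`x ∈ X_J` (so `χ(x)(π_J α) = π_J (α^x)`). -/
theorem stmt_11 {m : ℕ} {Q : Type*} [DecidableEq Q]
    (X : Subgroup (Equiv.Perm (Fin m → Q))) (C : Set (Fin m → Q))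
    (hNT : NbrTrans X C) (δ : ℕ) (hδ3 : 3 ≤ δ)
    (hδ : ∀ α ∈ C, ∀ β ∈ C, α ≠ β → δ ≤ hammingDist α β)
    (𝒥 : Finset (Finset (Fin m)))
    (hpart : ∀ k : Fin m, ∃! J', J' ∈ 𝒥 ∧ k ∈ J')
    (hinv : ∀ (h : Fin m → Equiv.Perm Q) (σ : Equiv.Perm (Fin m)),
      hammAut h σ ∈ X → ∀ J' ∈ 𝒥, J'.image σ ∈ 𝒥)
    (J : Finset (Fin m)) (hJ : J ∈ 𝒥) :
    let χSet : Set (Equiv.Perm (↥J → Q)) :=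
      {y | ∃ (h : Fin m → Equiv.Perm Q) (σ : Equiv.Perm (Fin m)),
        hammAut h σ ∈ X ∧ J.image σ = J ∧
        ∀ α : Fin m → Q, y (proj J α) = proj J (hammAut h σ α)}
    (∀ y ∈ χSet, (⇑y) '' ((proj J) '' C) = (proj J) '' C) ∧
    (∀ u ∈ (proj J) '' C, ∀ v ∈ (proj J) '' C, ∃ y ∈ χSet, y u = v) ∧
    (∀ ν₁ ν₂ : ↥J → Q, distToCode ν₁ ((proj J) '' C) = 1 →
      distToCode ν₂ ((proj J) '' C) = 1 → ∃ y ∈ χSet, y ν₁ = ν₂) := by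
  have hC : ∀ α ∈ C, ∀ β ∈ C, α ≠ β → 3 ≤ hammingDist α β :=
    fun α hα β hβ hαβ => hδ3.trans (hδ α hα β hβ hαβ)
  refine ⟨fun y hy => image_proj_eq_of_mem_inducedAutSet hNT.2.1 hy, ?_,
    fun ν₁ ν₂ => exists_inducedAut_proj_neighbour hNT hC hpart hinv hJ⟩
  rintro _ ⟨α, hα, rfl⟩ _ ⟨β, hβ, rfl⟩
  exact exists_inducedAut_proj_code hNT hC hpart hinv hJ hα hβ
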